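/- Let α, β be positive odd integers, ω ∈ ℤ, η ≥ 0 an integer, D̃ = {(0,0)ᵗ, (α,0)ᵗ, (ω, 2^η β)ᵗ, (−α−ω, −2^η β)ᵗ} ⊂ ℤ², M̃ ∈ M₂(ℤ) an expansive integer matrix, and A = 2^{η+1}αβ·I. Let Λ ⊂ ℤ² be a spectrum of the Moran measure μ_{A,M̃,D̃} with 0 ∈ Λ. For s ∈ S_η and ℓ ∈ T_η define Λ_{s,ℓ} = {γ ∈ ℤ² : s + 2^{η+1}αβ·ℓ + 2^{η+1}αβ·γ ∈ Λ}. If Λ_{s,ℓ} is nonempty, then Λ_{s,ℓ} is an orthogonal set of the self-affine measure μ_{M̃,D̃}. -/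

import Mathlib

open MeasureTheory Matrix Complex
open scoped ENNReal

noncomputable section

/-- The exponential function `x ↦ e^{2πi⟨l,x⟩}` on `Fin n → ℝ`. -/
def expChar {n : ℕ} (l x : Fin n → ℝ) : ℂ :=
  Complex.exp (2 * Real.pi * Complex.I * Complex.ofReal (∑ i, l i * x i))

/-- `Λ` is an orthogonal set of `μ`: the exponentials `e^{2πi⟨λ,·⟩}`, `λ ∈ Λ`,
form an orthonormal family in `L²(μ)`. -/
def IsOrthogonalSet {n : ℕ} (μ : Measure (Fin n → ℝ)) (Λ : Set (Fin n → ℝ)) : Prop :=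
  ∃ b : Λ → Lp ℂ 2 μ,
    (∀ l : Λ, (b l : (Fin n → ℝ) → ℂ) =ᵐ[μ] expChar (l : Fin n → ℝ)) ∧
    Orthonormal ℂ b

/-- `Λ` is a spectrum of `μ`: the exponentials `e^{2πi⟨λ,·⟩}`, `λ ∈ Λ`,
form an orthonormal basis (orthonormal and total) of `L²(μ)`. -/
def IsSpectrum {n : ℕ} (μ : Measure (Fin n → ℝ)) (Λ : Set (Fin n → ℝ)) : Prop :=
  ∃ b : Λ → Lp ℂ 2 μ,
    (∀ l : Λ, (b l : (Fin n → ℝ) → ℂ) =ᵐ[μ] expChar (l : Fin n → ℝ)) ∧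
    Orthonormal ℂ b ∧
    (Submodule.span ℂ (Set.range b)).topologicalClosure = ⊤

/-- `μ` is a spectral measure : some countable `Λ` is a spectrum of `μ`. -/
def IsSpectralMeasure {n : ℕ} (μ : Measure (Fin n → ℝ)) : Prop :=
  ∃ Λ : Set (Fin n → ℝ), Λ.Countable ∧ IsSpectrum μ Λ

/-- A real matrix is expansive if all of its (complex) eigenvalues have modulus `> 1`. -/
def Expansive {n : ℕ} (M : Matrix (Fin n) (Fin n) ℝ) : Prop :=
  ∀ z : ℂ, (M.map (Complex.ofReal)).charpoly.IsRoot z → 1 < ‖z‖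

/-- `μ` is the self-affine measure associated with `(M, D)`: a compactly supported
Borel probability measure satisfying `μ = (1/#D) ∑_{d ∈ D} μ ∘ φ_d⁻¹`,
where `φ_d x = M⁻¹(x + d)`. -/
def IsSelfAffineMeasure {n : ℕ} (M : Matrix (Fin n) (Fin n) ℝ) (D : Finset (Fin n → ℝ))
    (μ : Measure (Fin n → ℝ)) : Prop :=
  IsProbabilityMeasure μ ∧
  (∃ K : Set (Fin n → ℝ), IsCompact K ∧ μ Kᶜ = 0) ∧
  μ = (D.card : ℝ≥0∞)⁻¹ • ∑ d ∈ D, μ.map (fun x => M⁻¹.mulVec (x + d))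

/-- Coordinatewise cast of an integer vector to a real vector. -/
def intCast {n : ℕ} (v : Fin n → ℤ) : Fin n → ℝ := fun i => (v i : ℝ)

/-- The matrix `H = N^{-1/2} (e^{2πi⟨M⁻¹d, s⟩})_{d ∈ D, s ∈ S}`. -/
def hadamardH {n : ℕ} (M : Matrix (Fin n) (Fin n) ℤ) (D S : Finset (Fin n → ℤ)) :
    Matrix D S ℂ := fun d s =>
  (Real.sqrt (D.card) : ℂ)⁻¹ *
    Complex.exp (2 * Real.pi * Complex.I *
      Complex.ofReal (∑ i, ((M.map (Int.cast : ℤ → ℝ))⁻¹.mulVec (intCast d.1)) i * ((s.1 i : ℝ))))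

/-- `(M, D, S)` is a Hadamard triple: `#D = #S` and
`H = N^{-1/2}(e^{2πi⟨M⁻¹d,s⟩})` is unitary. -/
def IsHadamardTriple {n : ℕ} (M : Matrix (Fin n) (Fin n) ℤ) (D S : Finset (Fin n → ℤ)) :
    Prop :=
  D.card = S.card ∧ (hadamardH M D S)ᴴ * hadamardH M D S = 1

/-- `(M, D)` is admissible: there is `S ⊂ ℤⁿ` such that `(M, D, S)` is a Hadamard triple. -/
def IsAdmissible {n : ℕ} (M : Matrix (Fin n) (Fin n) ℤ) (D : Finset (Fin n → ℤ)) : Prop :=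
  ∃ S : Finset (Fin n → ℤ), IsHadamardTriple M D S

/-- The mask polynomial `m_D(x) = (1/#D) ∑_{d∈D} e^{2πi⟨d,x⟩}` of a finite set `D`. -/
def maskPoly {n : ℕ} (D : Finset (Fin n → ℝ)) (x : Fin n → ℝ) : ℂ :=
  (D.card : ℂ)⁻¹ * ∑ d ∈ D, Complex.exp (2 * Real.pi * Complex.I * Complex.ofReal (∑ i, d i * x i))

/-- The Fourier transform `μ̂(ξ) = ∫ e^{2πi⟨x,ξ⟩} dμ(x)`. -/
def fourierMeasure {n : ℕ} (μ : Measure (Fin n → ℝ)) (ξ : Fin n → ℝ) : ℂ :=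
  ∫ x, expChar ξ x ∂μ

/-- The sets `T_{η,0}, T_{η,1}, T_{η,2}, T_{η,3}` associated with positive odd
integers `α, β`, `ω ∈ ℤ` and `η ≥ 0`:
`T_{η,i} = {(2^η(2k+δᵢ)β, (2k'+εᵢ)α − (2k+δᵢ)ω)ᵗ/(2^{η+1}αβ) : 0 ≤ k < α, 0 ≤ k' < 2^η β}`
where `δᵢ = i % 2` and `εᵢ = i / 2`. -/
def Tset (α β ω : ℤ) (η : ℕ) (i : Fin 4) : Set (Fin 2 → ℝ) :=
  { v | ∃ k k' : ℤ, 0 ≤ k ∧ k < α ∧ 0 ≤ k' ∧ k' < 2 ^ η * β ∧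
      v = ((2 : ℝ) ^ (η + 1) * (α : ℝ) * (β : ℝ))⁻¹ •
        intCast ![2 ^ η * (2 * k + ((i.val % 2 : ℕ) : ℤ)) * β,
          (2 * k' + ((i.val / 2 : ℕ) : ℤ)) * α - (2 * k + ((i.val % 2 : ℕ) : ℤ)) * ω] }
/-- The scaling constant `2^{η+1}αβ`, as a real number. -/
def cconst (α β : ℤ) (η : ℕ) : ℝ := (2 : ℝ) ^ (η + 1) * (α : ℝ) * (β : ℝ)

/-! With `c = 2^{η+1}αβ`, the Moran measure is the convolution of a discrete measure `ν` supported
on `c⁻¹ℤ²` with the image of `μ` under `x ↦ c⁻¹x`. Hence its Fourier transform at `cξ`, `ξ ∈ ℤ²`,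
is `ν̂(cξ) μ̂(ξ) = μ̂(ξ)`. For `γ ≠ γ'` in `Λ_{s,ℓ}` the points `s + cℓ + cγ` and `s + cℓ + cγ'`
are distinct points of `Λ`, so the Fourier transform of the Moran measure vanishes at their
difference `c(γ' - γ)`; therefore `μ̂(γ' - γ) = 0`, which is orthogonality of `Λ_{s,ℓ}` in `L²(μ)`. -/

section

open Finset

variable {n : ℕ}

lemma continuous_expChar (l : Fin n → ℝ) : Continuous (expChar l) := by
  unfold expChar; fun_prop

lemma norm_expChar (l x : Fin n → ℝ) : ‖expChar l x‖ = 1 := by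
  rw [expChar, Complex.norm_exp]
  simp [Complex.mul_re]

lemma expChar_zero (x : Fin n → ℝ) : expChar 0 x = 1 := by
  simp [expChar]

lemma expChar_add_right (l x y : Fin n → ℝ) :
    expChar l (x + y) = expChar l x * expChar l y := by
  simp only [expChar, ← Complex.exp_add, Pi.add_apply, mul_add, sum_add_distrib]
  push_cast
  ring_nf

lemma conj_expChar_mul_expChar (a b x : Fin n → ℝ) :
    starRingEnd ℂ (expChar a x) * expChar b x = expChar (b - a) x := by
  simp only [expChar, ← Complex.exp_conj, ← Complex.exp_add, map_mul, Complex.conj_I,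
    Complex.conj_ofReal, map_ofNat, Pi.sub_apply, sub_mul, sum_sub_distrib]
  push_cast
  ring_nf

lemma expChar_smul_left (c : ℝ) (l x : Fin n → ℝ) : expChar (c • l) x = expChar l (c • x) := by
  simp only [expChar, Pi.smul_apply, smul_eq_mul, mul_assoc, mul_left_comm]

lemma expChar_intCast_intCast (ζ d : Fin n → ℤ) : expChar (intCast ζ) (intCast d) = 1 := by
  have h : (2 * Real.pi * Complex.I * ((∑ i, (ζ i : ℝ) * (d i : ℝ) : ℝ) : ℂ)) =
      ((∑ i, ζ i * d i : ℤ) : ℂ) * (2 * Real.pi * Complex.I) := by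
    push_cast; ring
  simp only [expChar, intCast, h, Complex.exp_int_mul_two_pi_mul_I]

lemma memLp_expChar (μ : Measure (Fin n → ℝ)) [IsFiniteMeasure μ] (l : Fin n → ℝ) :
    MemLp (expChar l) 2 μ :=
  .of_bound (continuous_expChar l).aestronglyMeasurable 1
    (.of_forall fun x => (norm_expChar l x).le)

lemma integrable_expChar (μ : Measure (Fin n → ℝ)) [IsFiniteMeasure μ] (l : Fin n → ℝ) :
    Integrable (expChar l) μ :=
  (memLp_expChar μ l).integrable one_le_two

lemma intCast_sub (v w : Fin n → ℤ) : intCast (v - w) = intCast v - intCast w := by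
  ext i; simp [intCast]

lemma fourierMeasure_zero (μ : Measure (Fin n → ℝ)) [IsProbabilityMeasure μ] :
    fourierMeasure μ 0 = 1 := by
  simp [fourierMeasure, expChar_zero]

lemma fourierMeasure_map_smul (μ : Measure (Fin n → ℝ)) (c : ℝ) (ξ : Fin n → ℝ) :
    fourierMeasure (μ.map (c • ·)) ξ = fourierMeasure μ (c • ξ) := by
  rw [fourierMeasure, integral_map (by fun_prop) (continuous_expChar ξ).aestronglyMeasurable]
  simp only [fourierMeasure, expChar_smul_left]

lemma fourierMeasure_map_add_prod (ν₁ ν₂ : Measure (Fin n → ℝ)) [IsFiniteMeasure ν₁]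
    [IsFiniteMeasure ν₂] (ξ : Fin n → ℝ) :
    fourierMeasure ((ν₁.prod ν₂).map fun p => p.1 + p.2) ξ =
      fourierMeasure ν₁ ξ * fourierMeasure ν₂ ξ := by
  rw [fourierMeasure, integral_map (by fun_prop) (continuous_expChar ξ).aestronglyMeasurable]
  simp only [expChar_add_right]
  exact integral_prod_mul (expChar ξ) (expChar ξ)

lemma fourierMeasure_smul_sum_dirac {ι : Type*} (r : ℝ≥0∞) (D : Finset ι)
    (x : ι → Fin n → ℝ) (ξ : Fin n → ℝ) :
    fourierMeasure (r • ∑ d ∈ D, Measure.dirac (x d)) ξ = r.toReal • ∑ d ∈ D, expChar ξ (x d) := by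
  rw [fourierMeasure, integral_smul_measure,
    integral_finsetSum_measure fun d _ => integrable_expChar _ ξ]
  simp only [integral_dirac]

lemma inner_eq_fourierMeasure_sub {μ : Measure (Fin n → ℝ)} {f g : Lp ℂ 2 μ} {a b : Fin n → ℝ}
    (hf : f =ᵐ[μ] expChar a) (hg : g =ᵐ[μ] expChar b) :
    inner ℂ f g = fourierMeasure μ (b - a) := by
  rw [MeasureTheory.L2.inner_def]
  refine integral_congr_ae ?_
  filter_upwards [hf, hg] with x hfx hgx
  rw [hfx, hgx, RCLike.inner_apply', conj_expChar_mul_expChar]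

lemma IsOrthogonalSet.fourierMeasure_sub_eq_zero {μ : Measure (Fin n → ℝ)}
    {Λ : Set (Fin n → ℝ)} (hΛ : IsOrthogonalSet μ Λ) {a b : Fin n → ℝ} (ha : a ∈ Λ)
    (hb : b ∈ Λ) (hab : a ≠ b) : fourierMeasure μ (b - a) = 0 := by
  obtain ⟨e, he, hon⟩ := hΛ
  rw [← inner_eq_fourierMeasure_sub (he ⟨a, ha⟩) (he ⟨b, hb⟩)]
  exact hon.2 fun h => hab (congrArg Subtype.val h)

lemma isOrthogonalSet_of_pairwise {μ : Measure (Fin n → ℝ)} [IsProbabilityMeasure μ]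
    {Λ : Set (Fin n → ℝ)} (hΛ : Λ.Pairwise fun a b => fourierMeasure μ (b - a) = 0) :
    IsOrthogonalSet μ Λ := by
  classical
  refine ⟨fun l => (memLp_expChar μ l).toLp _, fun l => MemLp.coeFn_toLp _, ?_⟩
  rw [orthonormal_iff_ite]
  intro a b
  rw [inner_eq_fourierMeasure_sub (MemLp.coeFn_toLp _) (MemLp.coeFn_toLp _)]
  split_ifs with hab
  · rw [hab, sub_self, fourierMeasure_zero]
  · exact hΛ a.2 b.2 fun h => hab (Subtype.ext h)

lemma IsSpectrum.isOrthogonalSet {μ : Measure (Fin n → ℝ)} {Λ : Set (Fin n → ℝ)}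
    (hΛ : IsSpectrum μ Λ) : IsOrthogonalSet μ Λ :=
  let ⟨e, he, hon, _⟩ := hΛ
  ⟨e, he, hon⟩

/-- The Moran measure `μ_{A,M̃,D̃}` for `A = c • 1`, with `μ` in the role of `μ_{M̃,D̃}`. -/
def moranMeasure (c : ℝ) (D : Finset (Fin n → ℤ)) (μ : Measure (Fin n → ℝ)) :
    Measure (Fin n → ℝ) :=
  ((((D.card : ℝ≥0∞)⁻¹ • ∑ d ∈ D, Measure.dirac (c⁻¹ • intCast d)).prod
    (μ.map (c⁻¹ • ·))).map fun p => p.1 + p.2)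

lemma fourierMeasure_moranMeasure_smul_intCast {c : ℝ} (hc : c ≠ 0) {D : Finset (Fin n → ℤ)}
    (hD : D.Nonempty) (μ : Measure (Fin n → ℝ)) [IsFiniteMeasure μ] (ζ : Fin n → ℤ) :
    fourierMeasure (moranMeasure c D μ) (c • intCast ζ) = fourierMeasure μ (intCast ζ) := by
  have hD₀ : D.card ≠ 0 := hD.card_pos.ne'
  have : IsProbabilityMeasure
      ((D.card : ℝ≥0∞)⁻¹ • ∑ d ∈ D, Measure.dirac (c⁻¹ • intCast d)) := by
    constructor
    simp [Measure.finsetSum_apply, ENNReal.inv_mul_cancel (Nat.cast_ne_zero.2 hD₀)]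
  have hdirac : ∀ d ∈ D, expChar (c • intCast ζ) (c⁻¹ • intCast d) = 1 := fun d _ => by
    rw [expChar_smul_left, smul_inv_smul₀ hc, expChar_intCast_intCast]
  rw [moranMeasure, fourierMeasure_map_add_prod, fourierMeasure_map_smul, inv_smul_smul₀ hc,
    fourierMeasure_smul_sum_dirac, sum_congr rfl hdirac]
  simp [inv_mul_cancel₀ (Nat.cast_ne_zero.2 hD₀ : (D.card : ℂ) ≠ 0)]

end

theorem spectrum_component_is_orthogonal_set_general
    (α β ω : ℤ) (hαpos : 0 < α) (hβpos : 0 < β) (η : ℕ)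
    (Dt : Finset (Fin 2 → ℤ))
    (hDt : Dt = {![0, 0], ![α, 0], ![ω, 2 ^ η * β], ![-α - ω, -(2 ^ η * β)]})
    (Mt : Matrix (Fin 2) (Fin 2) ℤ)
    (μ : Measure (Fin 2 → ℝ))
    (hμ : IsSelfAffineMeasure (Mt.map (Int.cast : ℤ → ℝ)) (Dt.image intCast) μ)
    (μAMD : Measure (Fin 2 → ℝ))
    (hAMD : μAMD =
      ((((Dt.card : ℝ≥0∞)⁻¹ • ∑ d ∈ Dt,
          Measure.dirac ((cconst α β η)⁻¹ • intCast d)).prod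
        (μ.map (fun x => (cconst α β η)⁻¹ • x))).map (fun p => p.1 + p.2)))
    (Λ : Set (Fin 2 → ℝ)) (hspec : IsSpectrum μAMD Λ)
    (s : Fin 2 → ℤ)
    (l : Fin 2 → ℝ)
    (Λsl : Set (Fin 2 → ℤ))
    (hΛsl : Λsl =
      {γ : Fin 2 → ℤ | intCast s + cconst α β η • l + cconst α β η • intCast γ ∈ Λ}) :
    IsOrthogonalSet μ (intCast '' Λsl) := by
  have : IsProbabilityMeasure μ := hμ.1
  have hc : cconst α β η ≠ 0 := by
    have : (0 : ℝ) < α := by exact_mod_cast hαpos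
    have : (0 : ℝ) < β := by exact_mod_cast hβpos
    unfold cconst; positivity
  have hD : Dt.Nonempty := by simp [hDt]
  have hΛ : IsOrthogonalSet (moranMeasure (cconst α β η) Dt μ) Λ := by
    rw [moranMeasure, ← hAMD]
    exact hspec.isOrthogonalSet
  refine isOrthogonalSet_of_pairwise ?_
  rintro _ ⟨γ, hγ, rfl⟩ _ ⟨γ', hγ', rfl⟩ hne
  rw [hΛsl] at hγ hγ'
  rw [← intCast_sub, ← fourierMeasure_moranMeasure_smul_intCast hc hD]
  convert hΛ.fourierMeasure_sub_eq_zero hγ hγ'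
    (fun h => hne (smul_right_injective _ hc (add_left_cancel h))) using 2
  rw [intCast_sub, smul_sub]
  abel

theorem spectrum_component_is_orthogonal_set
    (α β ω : ℤ) (hα : Odd α) (hβ : Odd β) (hαpos : 0 < α) (hβpos : 0 < β) (η : ℕ)
    (Dt : Finset (Fin 2 → ℤ))
    (hDt : Dt = {![0, 0], ![α, 0], ![ω, 2 ^ η * β], ![-α - ω, -(2 ^ η * β)]})
    (Mt : Matrix (Fin 2) (Fin 2) ℤ) (hMt : Expansive (Mt.map (Int.cast : ℤ → ℝ)))
    (μ : Measure (Fin 2 → ℝ))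
    (hμ : IsSelfAffineMeasure (Mt.map (Int.cast : ℤ → ℝ)) (Dt.image intCast) μ)
    (μAMD : Measure (Fin 2 → ℝ))
    (hAMD : μAMD =
      ((((Dt.card : ℝ≥0∞)⁻¹ • ∑ d ∈ Dt,
          Measure.dirac ((cconst α β η)⁻¹ • intCast d)).prod
        (μ.map (fun x => (cconst α β η)⁻¹ • x))).map (fun p => p.1 + p.2)))
    (Λ : Set (Fin 2 → ℝ)) (hΛint : Λ ⊆ Set.range intCast)
    (h0 : (0 : Fin 2 → ℝ) ∈ Λ) (hspec : IsSpectrum μAMD Λ)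
    (s : Fin 2 → ℤ) (hs : 0 ≤ s 0 ∧ s 0 < 2 ^ η * β ∧ 0 ≤ s 1 ∧ s 1 < α)
    (l : Fin 2 → ℝ) (hlT : l ∈ ⋃ i : Fin 4, Tset α β ω η i)
    (Λsl : Set (Fin 2 → ℤ))
    (hΛsl : Λsl =
      {γ : Fin 2 → ℤ | intCast s + cconst α β η • l + cconst α β η • intCast γ ∈ Λ})
    (hne : Λsl.Nonempty) :
    IsOrthogonalSet μ (intCast '' Λsl) :=
  spectrum_component_is_orthogonal_set_general α β ω hαpos hβpos η Dt hDt Mt μ hμ μAMD hAMD Λ hspec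
    s l Λsl hΛsl

end
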